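/- arXiv:1707.08330 — 7 statements merged into one kernel-verified Lean document; each statement's English description precedes it below -/
import Mathlib

section
/- In the algebra A_f = K{r,s,t}/I associated to a binary quartic f = ax⁴+bx³z+cx²z²+dxz³+ez⁴, where I is generated by r²−a, rs+sr−b, rt+tr+s²−c, st+ts−d, t²−e, the element ξ = s² − c is central. -/
/-- The relations defining the algebra `A_f` associated to the binary quartic
`f = a x⁴ + b x³ z + c x² z² + d x z³ + e z⁴`: the quotient of the free algebra on
generators `r = ι 0`, `s = ι 1`, `t = ι 2` by the two-sided ideal generated by
`r²−a`, `rs+sr−b`, `rt+tr+s²−c`, `st+ts−d`, `t²−e`. -/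
def bqRel (K : Type*) [Field K] (a b c d e : K) :
    FreeAlgebra K (Fin 3) → FreeAlgebra K (Fin 3) → Prop := fun x y =>
  y = 0 ∧ (
    x = FreeAlgebra.ι K 0 * FreeAlgebra.ι K 0 - algebraMap K _ a ∨
    x = FreeAlgebra.ι K 0 * FreeAlgebra.ι K 1 + FreeAlgebra.ι K 1 * FreeAlgebra.ι K 0
        - algebraMap K _ b ∨
    x = FreeAlgebra.ι K 0 * FreeAlgebra.ι K 2 + FreeAlgebra.ι K 2 * FreeAlgebra.ι K 0
        + FreeAlgebra.ι K 1 * FreeAlgebra.ι K 1 - algebraMap K _ c ∨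
    x = FreeAlgebra.ι K 1 * FreeAlgebra.ι K 2 + FreeAlgebra.ι K 2 * FreeAlgebra.ι K 1
        - algebraMap K _ d ∨
    x = FreeAlgebra.ι K 2 * FreeAlgebra.ι K 2 - algebraMap K _ e)

/-- The algebra `A_f` associated to a binary quartic. -/
def BQAlg (K : Type*) [Field K] (a b c d e : K) := RingQuot (bqRel K a b c d e)

noncomputable instance (K : Type*) [Field K] (a b c d e : K) : Ring (BQAlg K a b c d e) :=
  inferInstanceAs (Ring (RingQuot _))

noncomputable instance (K : Type*) [Field K] (a b c d e : K) : Algebra K (BQAlg K a b c d e) :=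
  inferInstanceAs (Algebra K (RingQuot _))

/-- The generator `r` of `A_f`. -/
noncomputable def bqR (K : Type*) [Field K] (a b c d e : K) : BQAlg K a b c d e :=
  RingQuot.mkAlgHom K (bqRel K a b c d e) (FreeAlgebra.ι K 0)

/-- The generator `s` of `A_f`. -/
noncomputable def bqS (K : Type*) [Field K] (a b c d e : K) : BQAlg K a b c d e :=
  RingQuot.mkAlgHom K (bqRel K a b c d e) (FreeAlgebra.ι K 1)

/-- The generator `t` of `A_f`. -/
noncomputable def bqT (K : Type*) [Field K] (a b c d e : K) : BQAlg K a b c d e :=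
  RingQuot.mkAlgHom K (bqRel K a b c d e) (FreeAlgebra.ι K 2)


/-! In any ring `r s² − s² r = (rs + sr) s − s (rs + sr)`, so `r` commutes with `s²` as soon as
`rs + sr` commutes with `s`. The relations `rs + sr = b` and `st + ts = d` have scalar right-hand
sides, so `s²` commutes with the generators `r, s, t`, hence with all of `A_f`, and so does
`ξ = s² − c`. -/

theorem Commute.mul_self_of_commute_add {A : Type*} [Ring A] {r s : A}
    (h : Commute (r * s + s * r) s) : Commute r (s * s) := by
  have key : r * (s * s) - s * s * r = (r * s + s * r) * s - s * (r * s + s * r) := by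
    noncomm_ring
  rw [Commute, SemiconjBy, ← sub_eq_zero, key, h.eq, sub_self]

theorem FreeAlgebra.commute_of_surjective {R X A : Type*} [CommSemiring R] [Semiring A]
    [Algebra R A] {f : FreeAlgebra R X →ₐ[R] A} (hf : Function.Surjective f) {x : A}
    (h : ∀ i, Commute x (f (FreeAlgebra.ι R i))) (z : A) : Commute x z := by
  have hz : z ∈ Algebra.adjoin R (Set.range (f ∘ FreeAlgebra.ι R)) := by
    rw [Set.range_comp, ← AlgHom.map_adjoin, FreeAlgebra.adjoin_range_ι, Algebra.map_top,
      (AlgHom.range_eq_top f).mpr hf]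
    exact Algebra.mem_top
  exact Algebra.commute_of_mem_adjoin_of_forall_mem_commute hz (by simpa using h)

section BQAlg

variable (K : Type*) [Field K] (a b c d e : K)

theorem bqR_mul_bqS_add_bqS_mul_bqR :
    bqR K a b c d e * bqS K a b c d e + bqS K a b c d e * bqR K a b c d e =
      algebraMap K _ b := by
  have h := RingQuot.mkAlgHom_rel K
    (show bqRel K a b c d e (FreeAlgebra.ι K 0 * FreeAlgebra.ι K 1 +
      FreeAlgebra.ι K 1 * FreeAlgebra.ι K 0 - algebraMap K _ b) 0 from
      ⟨rfl, Or.inr (Or.inl rfl)⟩)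
  simp only [map_sub, map_add, map_mul, map_zero, AlgHom.commutes, sub_eq_zero] at h
  exact h

theorem bqS_mul_bqT_add_bqT_mul_bqS :
    bqS K a b c d e * bqT K a b c d e + bqT K a b c d e * bqS K a b c d e =
      algebraMap K _ d := by
  have h := RingQuot.mkAlgHom_rel K
    (show bqRel K a b c d e (FreeAlgebra.ι K 1 * FreeAlgebra.ι K 2 +
      FreeAlgebra.ι K 2 * FreeAlgebra.ι K 1 - algebraMap K _ d) 0 from
      ⟨rfl, Or.inr (Or.inr (Or.inr (Or.inl rfl)))⟩)
  simp only [map_sub, map_add, map_mul, map_zero, AlgHom.commutes, sub_eq_zero] at h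
  exact h

theorem commute_bqS_sq (z : BQAlg K a b c d e) : Commute (bqS K a b c d e ^ 2) z := by
  refine FreeAlgebra.commute_of_surjective (RingQuot.mkAlgHom_surjective K _) (fun i => ?_) z
  rw [sq]
  fin_cases i
  · change Commute _ (bqR K a b c d e)
    refine (Commute.mul_self_of_commute_add ?_).symm
    rw [bqR_mul_bqS_add_bqS_mul_bqR]
    exact Algebra.commute_algebraMap_left b _
  · exact (Commute.refl (bqS K a b c d e)).mul_left (Commute.refl _)
  · change Commute _ (bqT K a b c d e)
    refine (Commute.mul_self_of_commute_add ?_).symm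
    rw [add_comm, bqS_mul_bqT_add_bqT_mul_bqS]
    exact Algebra.commute_algebraMap_left d _

end BQAlg

theorem bq_xi_central_general (K : Type*) [Field K]
    (a b c d e : K) :
    ∀ z : BQAlg K a b c d e,
      (bqS K a b c d e ^ 2 - algebraMap K _ c) * z =
        z * (bqS K a b c d e ^ 2 - algebraMap K _ c) := fun z =>
  (commute_bqS_sq K a b c d e z).sub_left (Algebra.commute_algebraMap_left c z)

/-- In the algebra `A_f` of a binary quartic, the element `ξ = s² − c` is central. -/
theorem bq_xi_central (K : Type*) [Field K] (h2 : (2 : K) ≠ 0) (h3 : (3 : K) ≠ 0)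
    (a b c d e : K) :
    ∀ z : BQAlg K a b c d e,
      (bqS K a b c d e ^ 2 - algebraMap K _ c) * z =
        z * (bqS K a b c d e ^ 2 - algebraMap K _ c) :=
  bq_xi_central_general K a b c d e
end

section
/- In the algebra A_f associated to a binary quartic f = ax⁴+bx³z+cx²z²+dxz³+ez⁴, the element η = rst − tsr is central. -/
/-!
Write `B = rs + sr` and `D = st + ts`. Expanding the commutators of `η = rst − tsr` with the
generators gives

* `[η, r] = [r, D] r + [st, r²]`,
* `[η, s] = [rs, D] − [B, st]`,
* `[η, t] = [t², sr] + [B, t] t`,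

and in `A_f` the elements `r²`, `B`, `D`, `t²` are the scalars `a`, `b`, `d`, `e`, so all three
commutators vanish. An element commuting with the generators is central.
-/

section Ring

variable {R : Type*} [Ring R] {r s t : R}

theorem commute_rst_sub_tsr_left (hr : Commute (r * r) (s * t))
    (hD : Commute (s * t + t * s) r) : Commute (r * s * t - t * s * r) r := by
  have h : (r * s * t - t * s * r) * r - r * (r * s * t - t * s * r) =
      (r * (s * t + t * s) - (s * t + t * s) * r) * r + (s * t * (r * r) - r * r * (s * t)) := by
    noncomm_ring
  rw [Commute, SemiconjBy, ← sub_eq_zero, h, hD.eq, hr.eq, sub_self, sub_self, zero_mul, add_zero]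

theorem commute_rst_sub_tsr_middle (hB : Commute (r * s + s * r) (s * t))
    (hD : Commute (s * t + t * s) (r * s)) : Commute (r * s * t - t * s * r) s := by
  have h : (r * s * t - t * s * r) * s - s * (r * s * t - t * s * r) =
      (r * s * (s * t + t * s) - (s * t + t * s) * (r * s))
        - ((r * s + s * r) * (s * t) - s * t * (r * s + s * r)) := by
    noncomm_ring
  rw [Commute, SemiconjBy, ← sub_eq_zero, h, hB.eq, hD.eq, sub_self, sub_self, sub_zero]

theorem commute_rst_sub_tsr_right (ht : Commute (t * t) (s * r))
    (hB : Commute (r * s + s * r) t) : Commute (r * s * t - t * s * r) t := by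
  have h : (r * s * t - t * s * r) * t - t * (r * s * t - t * s * r) =
      (t * t * (s * r) - s * r * (t * t)) + ((r * s + s * r) * t - t * (r * s + s * r)) * t := by
    noncomm_ring
  rw [Commute, SemiconjBy, ← sub_eq_zero, h, hB.eq, ht.eq, sub_self, sub_self, zero_mul, add_zero]

end Ring

namespace BQAlg

variable {K : Type*} [Field K] {a b c d e : K}

theorem bqR_mul_self : bqR K a b c d e * bqR K a b c d e = algebraMap K _ a := by
  have h := RingQuot.mkAlgHom_rel K
    (show bqRel K a b c d e _ 0 from ⟨rfl, Or.inl rfl⟩)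
  rwa [map_zero, map_sub, map_mul, AlgHom.commutes, sub_eq_zero] at h

theorem bqR_mul_bqS_add_bqS_mul_bqR :
    bqR K a b c d e * bqS K a b c d e + bqS K a b c d e * bqR K a b c d e = algebraMap K _ b := by
  have h := RingQuot.mkAlgHom_rel K
    (show bqRel K a b c d e _ 0 from ⟨rfl, Or.inr (Or.inl rfl)⟩)
  rwa [map_zero, map_sub, map_add, map_mul, map_mul, AlgHom.commutes, sub_eq_zero] at h

theorem bqS_mul_bqT_add_bqT_mul_bqS :
    bqS K a b c d e * bqT K a b c d e + bqT K a b c d e * bqS K a b c d e = algebraMap K _ d := by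
  have h := RingQuot.mkAlgHom_rel K
    (show bqRel K a b c d e _ 0 from ⟨rfl, Or.inr (Or.inr (Or.inr (Or.inl rfl)))⟩)
  rwa [map_zero, map_sub, map_add, map_mul, map_mul, AlgHom.commutes, sub_eq_zero] at h

theorem bqT_mul_self : bqT K a b c d e * bqT K a b c d e = algebraMap K _ e := by
  have h := RingQuot.mkAlgHom_rel K
    (show bqRel K a b c d e _ 0 from ⟨rfl, Or.inr (Or.inr (Or.inr (Or.inr rfl)))⟩)
  rwa [map_zero, map_sub, map_mul, AlgHom.commutes, sub_eq_zero] at h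

theorem commute_of_commute_generators {x : BQAlg K a b c d e} (hr : Commute x (bqR K a b c d e))
    (hs : Commute x (bqS K a b c d e)) (ht : Commute x (bqT K a b c d e)) (z : BQAlg K a b c d e) :
    Commute x z := by
  obtain ⟨w, rfl⟩ := RingQuot.mkAlgHom_surjective K (bqRel K a b c d e) z
  have hgen : Algebra.adjoin K (Set.range (FreeAlgebra.ι K)) ≤
      (Subalgebra.centralizer K {x}).comap (RingQuot.mkAlgHom K (bqRel K a b c d e)) := by
    refine Algebra.adjoin_le ?_
    rintro _ ⟨i, rfl⟩ _ rfl
    fin_cases i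
    exacts [hr.eq, hs.eq, ht.eq]
  rw [FreeAlgebra.adjoin_range_ι] at hgen
  exact hgen Algebra.mem_top x rfl

end BQAlg

theorem bq_eta_central_general (K : Type*) [Field K] (a b c d e : K) :
    ∀ z : BQAlg K a b c d e,
      (bqR K a b c d e * bqS K a b c d e * bqT K a b c d e
        - bqT K a b c d e * bqS K a b c d e * bqR K a b c d e) * z =
      z * (bqR K a b c d e * bqS K a b c d e * bqT K a b c d e
        - bqT K a b c d e * bqS K a b c d e * bqR K a b c d e) := by
  open BQAlg in
  intro z
  refine (commute_of_commute_generators ?_ ?_ ?_ z).eq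
  · refine commute_rst_sub_tsr_left ?_ ?_
    · rw [bqR_mul_self]; exact Algebra.commute_algebraMap_left a _
    · rw [bqS_mul_bqT_add_bqT_mul_bqS]; exact Algebra.commute_algebraMap_left d _
  · refine commute_rst_sub_tsr_middle ?_ ?_
    · rw [bqR_mul_bqS_add_bqS_mul_bqR]; exact Algebra.commute_algebraMap_left b _
    · rw [bqS_mul_bqT_add_bqT_mul_bqS]; exact Algebra.commute_algebraMap_left d _
  · refine commute_rst_sub_tsr_right ?_ ?_
    · rw [bqT_mul_self]; exact Algebra.commute_algebraMap_left e _
    · rw [bqR_mul_bqS_add_bqS_mul_bqR]; exact Algebra.commute_algebraMap_left b _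

/-- In the algebra `A_f` of a binary quartic, the element `η = rst − tsr` is central. -/
theorem bq_eta_central (K : Type*) [Field K] (h2 : (2 : K) ≠ 0) (h3 : (3 : K) ≠ 0)
    (a b c d e : K) :
    ∀ z : BQAlg K a b c d e,
      (bqR K a b c d e * bqS K a b c d e * bqT K a b c d e
        - bqT K a b c d e * bqS K a b c d e * bqR K a b c d e) * z =
      z * (bqR K a b c d e * bqS K a b c d e * bqT K a b c d e
        - bqT K a b c d e * bqS K a b c d e * bqR K a b c d e) :=
  bq_eta_central_general K a b c d e
end

section
/- In the algebra A_f associated to a binary quartic f = ax⁴+bx³z+cx²z²+dxz³+ez⁴, the central elements ξ = s²−c and η = rst−tsr satisfy the Weierstrass relation η² = ξ³ + cξ² − (4ae−bd)ξ − 4ace + b²e + ad². -/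
section Relations

variable {K A : Type*} [CommRing K] [Ring A] [Algebra K A] {a b c d e : K} {r s t : A}

theorem mul_mul_eq_of_mul_eq {u v w : A} (h : u * v = w) (x : A) : u * (v * x) = w * x := by
  rw [← mul_assoc, h]

theorem weierstrass_of_binaryQuartic_relations
    (hrr : r * r = algebraMap K A a) (hrs : r * s + s * r = algebraMap K A b)
    (hrt : r * t + t * r + s * s = algebraMap K A c) (hst : s * t + t * s = algebraMap K A d)
    (htt : t * t = algebraMap K A e) :
    (r * s * t - t * s * r) ^ 2 =
      (s ^ 2 - algebraMap K A c) ^ 3 + algebraMap K A c * (s ^ 2 - algebraMap K A c) ^ 2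
        - algebraMap K A (4 * a * e - b * d) * (s ^ 2 - algebraMap K A c)
        - algebraMap K A (4 * a * c * e) + algebraMap K A (b ^ 2 * e)
        + algebraMap K A (a * d ^ 2) := by
  have hsr : s * r = algebraMap K A b - r * s := by rw [← hrs]; abel
  have htr : t * r = algebraMap K A c - s * s - r * t := by rw [← hrt]; abel
  have hts : t * s = algebraMap K A d - s * t := by rw [← hst]; abel
  simp only [pow_succ, pow_zero, one_mul, mul_sub, sub_mul, mul_assoc,
    hrr, hsr, htr, hts, htt, mul_mul_eq_of_mul_eq hrr, mul_mul_eq_of_mul_eq hsr,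
    mul_mul_eq_of_mul_eq htr, mul_mul_eq_of_mul_eq hts,
    Algebra.algebraMap_eq_smul_one, smul_mul_assoc, mul_smul_comm, smul_smul, mul_one,
    map_sub, map_mul]
  module

end Relations

section BQAlg

variable (K : Type*) [Field K] (a b c d e : K)

theorem mkAlgHom_eq_zero_of_bqRel {x : FreeAlgebra K (Fin 3)} (hx : bqRel K a b c d e x 0) :
    RingQuot.mkAlgHom K (bqRel K a b c d e) x = 0 := by
  simpa using RingQuot.mkAlgHom_rel K hx

theorem bqR_mul_self : bqR K a b c d e * bqR K a b c d e = algebraMap K _ a := by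
  have := mkAlgHom_eq_zero_of_bqRel K a b c d e ⟨rfl, Or.inl rfl⟩
  rwa [map_sub, map_mul, AlgHom.commutes, sub_eq_zero] at this

theorem bqR_mul_bqT_add_bqT_mul_bqR_add_bqS_mul_bqS :
    bqR K a b c d e * bqT K a b c d e + bqT K a b c d e * bqR K a b c d e
      + bqS K a b c d e * bqS K a b c d e = algebraMap K _ c := by
  have := mkAlgHom_eq_zero_of_bqRel K a b c d e ⟨rfl, Or.inr <| Or.inr <| Or.inl rfl⟩
  rwa [map_sub, map_add, map_add, map_mul, map_mul, map_mul, AlgHom.commutes, sub_eq_zero] at this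

theorem bqT_mul_self : bqT K a b c d e * bqT K a b c d e = algebraMap K _ e := by
  have := mkAlgHom_eq_zero_of_bqRel K a b c d e ⟨rfl, Or.inr <| Or.inr <| Or.inr <| Or.inr rfl⟩
  rwa [map_sub, map_mul, AlgHom.commutes, sub_eq_zero] at this

end BQAlg

theorem bq_weierstrass_general (K : Type*) [Field K]
    (a b c d e : K) :
    letI r := bqR K a b c d e
    letI s := bqS K a b c d e
    letI t := bqT K a b c d e
    letI ξ : BQAlg K a b c d e := s ^ 2 - algebraMap K _ c
    letI η : BQAlg K a b c d e := r * s * t - t * s * r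
    η ^ 2 = ξ ^ 3 + algebraMap K _ c * ξ ^ 2 - algebraMap K _ (4 * a * e - b * d) * ξ
      - algebraMap K _ (4 * a * c * e) + algebraMap K _ (b ^ 2 * e)
      + algebraMap K _ (a * d ^ 2) :=
  weierstrass_of_binaryQuartic_relations (bqR_mul_self K a b c d e)
    (bqR_mul_bqS_add_bqS_mul_bqR K a b c d e)
    (bqR_mul_bqT_add_bqT_mul_bqR_add_bqS_mul_bqS K a b c d e)
    (bqS_mul_bqT_add_bqT_mul_bqS K a b c d e) (bqT_mul_self K a b c d e)

/-- The central elements `ξ = s²−c` and `η = rst−tsr` of the binary quartic algebra `A_f`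
satisfy the Weierstrass relation `η² = ξ³ + cξ² − (4ae−bd)ξ − 4ace + b²e + ad²`. -/
theorem bq_weierstrass (K : Type*) [Field K] (h2 : (2 : K) ≠ 0) (h3 : (3 : K) ≠ 0)
    (a b c d e : K) :
    letI r := bqR K a b c d e
    letI s := bqS K a b c d e
    letI t := bqT K a b c d e
    letI ξ : BQAlg K a b c d e := s ^ 2 - algebraMap K _ c
    letI η : BQAlg K a b c d e := r * s * t - t * s * r
    η ^ 2 = ξ ^ 3 + algebraMap K _ c * ξ ^ 2 - algebraMap K _ (4 * a * e - b * d) * ξ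
      - algebraMap K _ (4 * a * c * e) + algebraMap K _ (b ^ 2 * e)
      + algebraMap K _ (a * d ^ 2) :=
  bq_weierstrass_general K a b c d e
end

section
/- The derivation D on A_f (binary quartic case) determined by D(r)=[s,r], D(s)=[t,r], D(t)=0 acts on the central elements ξ = s²−c, η = rst−tsr by Dξ = 2η and Dη = 3ξ² + 2cξ − (4ae − bd). -/
/-!
The relations of `A_f` are rewrite rules `rr → a`, `sr → b − rs`, `tr → c − ss − rt`,
`ts → d − st`, `tt → e` putting any word into a combination of words ordered as `r < s < t`.
By the Leibniz rule `Dξ = [t,r]s + s[t,r]` and `Dη` is an explicit cubic expression in `r, s, t`;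
normal-ordering both sides reduces each claimed identity to an identity of ordered words.
Only the five relations enter, so this works for any triple satisfying them in any algebra.
-/

section

variable {K R : Type*} [CommRing K] [Ring R] [Algebra K R]

structure IsBQTriple (a b c d e : K) (r s t : R) : Prop where
  rr : r * r = algebraMap K R a
  rs : r * s + s * r = algebraMap K R b
  rt : r * t + t * r + s * s = algebraMap K R c
  st : s * t + t * s = algebraMap K R d
  tt : t * t = algebraMap K R e

namespace IsBQTriple

variable {a b c d e : K} {r s t : R} (h : IsBQTriple a b c d e r s t) (w : R)
include h

theorem r_mul_r_mul : r * (r * w) = a • w := by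
  rw [← mul_assoc, h.rr, Algebra.smul_def]

theorem s_mul_r_mul : s * (r * w) = b • w - r * (s * w) := by
  rw [← mul_assoc, ← mul_assoc, Algebra.smul_def, ← h.rs]; noncomm_ring

theorem t_mul_r_mul : t * (r * w) = c • w - s * (s * w) - r * (t * w) := by
  rw [← mul_assoc, ← mul_assoc, ← mul_assoc, Algebra.smul_def, ← h.rt]; noncomm_ring

theorem t_mul_s_mul : t * (s * w) = d • w - s * (t * w) := by
  rw [← mul_assoc, ← mul_assoc, Algebra.smul_def, ← h.st]; noncomm_ring

theorem t_mul_t_mul : t * (t * w) = e • w := by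
  rw [← mul_assoc, h.tt, Algebra.smul_def]

omit w

/- Multiplying on the right by an arbitrary `w` puts every monomial in the form `x * (y * ⋯)`,
where the rules above rewrite it towards words ordered as `r < s < t`. -/
theorem comm_t_r_anticomm_s :
    (t * r - r * t) * s + s * (t * r - r * t) = 2 * (r * s * t - t * s * r) := by
  suffices ∀ w : R, ((t * r - r * t) * s + s * (t * r - r * t)) * w =
      (2 : K) • (r * (s * (t * w)) - t * (s * (r * w))) by
    simpa [mul_assoc, Algebra.smul_def, map_ofNat] using this 1
  intro w
  simp only [mul_sub, sub_mul, add_mul, mul_assoc, smul_sub, mul_smul_comm, smul_mul_assoc,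
    smul_smul, h.s_mul_r_mul, h.t_mul_r_mul, h.t_mul_s_mul]
  module

theorem leibniz_expansion_eta :
    (s * r - r * s) * s * t + r * (t * r - r * t) * t - t * (t * r - r * t) * r
        - t * s * (s * r - r * s) =
      3 * (s ^ 2 - algebraMap K R c) ^ 2 + algebraMap K R (2 * c) * (s ^ 2 - algebraMap K R c)
        - algebraMap K R (4 * a * e - b * d) := by
  suffices ∀ w : R, ((s * r - r * s) * s * t + r * (t * r - r * t) * t - t * (t * r - r * t) * r
        - t * s * (s * r - r * s)) * w =
      (3 : K) • ((s ^ 2 - algebraMap K R c) * ((s ^ 2 - algebraMap K R c) * w))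
        + (2 * c) • ((s ^ 2 - algebraMap K R c) * w) - (4 * a * e - b * d) • w by
    simpa [mul_assoc, Algebra.smul_def, map_ofNat, sq] using this 1
  intro w
  simp only [sq, Algebra.algebraMap_eq_smul_one, one_mul, mul_sub, sub_mul, add_mul, mul_assoc,
    smul_sub, mul_smul_comm, smul_mul_assoc, smul_smul,
    h.r_mul_r_mul, h.s_mul_r_mul, h.t_mul_r_mul, h.t_mul_s_mul, h.t_mul_t_mul]
  module

end IsBQTriple

section Leibniz

variable (D : R →ₗ[K] R) (hD : ∀ x y, D (x * y) = D x * y + x * D y)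
include hD

theorem map_algebraMap_of_leibniz (k : K) : D (algebraMap K R k) = 0 := by
  have hD1 : D 1 = 0 := by simpa using hD 1 1
  rw [Algebra.algebraMap_eq_smul_one, map_smul, hD1, smul_zero]

theorem map_mul_mul_of_leibniz (x y z : R) :
    D (x * y * z) = D x * y * z + x * D y * z + x * y * D z := by
  rw [hD, hD, add_mul]

variable {a b c d e : K} {r s t : R} (h : IsBQTriple a b c d e r s t)
include h

theorem IsBQTriple.map_xi_of_leibniz (hs : D s = t * r - r * t) :
    D (s ^ 2 - algebraMap K R c) = 2 * (r * s * t - t * s * r) := by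
  rw [map_sub, map_algebraMap_of_leibniz D hD, sub_zero, sq, hD, hs, h.comm_t_r_anticomm_s]

theorem IsBQTriple.map_eta_of_leibniz (hr : D r = s * r - r * s) (hs : D s = t * r - r * t)
    (ht : D t = 0) :
    D (r * s * t - t * s * r) =
      3 * (s ^ 2 - algebraMap K R c) ^ 2 + algebraMap K R (2 * c) * (s ^ 2 - algebraMap K R c)
        - algebraMap K R (4 * a * e - b * d) := by
  rw [← h.leibniz_expansion_eta, map_sub, map_mul_mul_of_leibniz D hD,
    map_mul_mul_of_leibniz D hD, hr, hs, ht]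
  noncomm_ring

end Leibniz

end

theorem isBQTriple_bqR_bqS_bqT {K : Type*} [Field K] (a b c d e : K) :
    IsBQTriple a b c d e (bqR K a b c d e) (bqS K a b c d e) (bqT K a b c d e) := by
  have rel {x} (hx : bqRel K a b c d e x 0) : RingQuot.mkAlgHom K (bqRel K a b c d e) x = 0 :=
    by simpa using RingQuot.mkAlgHom_rel K hx
  have rr := rel ⟨rfl, .inl rfl⟩
  have rs := rel ⟨rfl, .inr <| .inl rfl⟩
  have rt := rel ⟨rfl, .inr <| .inr <| .inl rfl⟩
  have st := rel ⟨rfl, .inr <| .inr <| .inr <| .inl rfl⟩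
  have tt := rel ⟨rfl, .inr <| .inr <| .inr <| .inr rfl⟩
  simp only [map_sub, map_add, map_mul, AlgHom.commutes, sub_eq_zero] at rr rs rt st tt
  exact ⟨rr, rs, rt, st, tt⟩

theorem bq_derivation_on_centre_general (K : Type*) [Field K]
    (a b c d e : K) (D : BQAlg K a b c d e →ₗ[K] BQAlg K a b c d e)
    (hLeib : ∀ x y : BQAlg K a b c d e, D (x * y) = D x * y + x * D y)
    (hr : D (bqR K a b c d e) = bqS K a b c d e * bqR K a b c d e
        - bqR K a b c d e * bqS K a b c d e)
    (hs : D (bqS K a b c d e) = bqT K a b c d e * bqR K a b c d e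
        - bqR K a b c d e * bqT K a b c d e)
    (ht : D (bqT K a b c d e) = 0) :
    letI r := bqR K a b c d e
    letI s := bqS K a b c d e
    letI t := bqT K a b c d e
    letI ξ : BQAlg K a b c d e := s ^ 2 - algebraMap K _ c
    letI η : BQAlg K a b c d e := r * s * t - t * s * r
    D ξ = 2 * η ∧
      D η = 3 * ξ ^ 2 + algebraMap K _ (2 * c) * ξ - algebraMap K _ (4 * a * e - b * d) :=
  have h := isBQTriple_bqR_bqS_bqT a b c d e
  ⟨h.map_xi_of_leibniz D hLeib hs, h.map_eta_of_leibniz D hLeib hr hs ht⟩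

/-- The derivation `D` on the binary quartic algebra `A_f` determined by `D r = [s,r]`,
`D s = [t,r]`, `D t = 0` acts on the central elements `ξ = s²−c`, `η = rst−tsr` by
`Dξ = 2η` and `Dη = 3ξ² + 2cξ − (4ae−bd)`. -/
theorem bq_derivation_on_centre (K : Type*) [Field K] (h2 : (2 : K) ≠ 0) (h3 : (3 : K) ≠ 0)
    (a b c d e : K) (D : BQAlg K a b c d e →ₗ[K] BQAlg K a b c d e)
    (hLeib : ∀ x y : BQAlg K a b c d e, D (x * y) = D x * y + x * D y)
    (hr : D (bqR K a b c d e) = bqS K a b c d e * bqR K a b c d e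
        - bqR K a b c d e * bqS K a b c d e)
    (hs : D (bqS K a b c d e) = bqT K a b c d e * bqR K a b c d e
        - bqR K a b c d e * bqT K a b c d e)
    (ht : D (bqT K a b c d e) = 0) :
    letI r := bqR K a b c d e
    letI s := bqS K a b c d e
    letI t := bqT K a b c d e
    letI ξ : BQAlg K a b c d e := s ^ 2 - algebraMap K _ c
    letI η : BQAlg K a b c d e := r * s * t - t * s * r
    D ξ = 2 * η ∧
      D η = 3 * ξ ^ 2 + algebraMap K _ (2 * c) * ξ - algebraMap K _ (4 * a * e - b * d) :=
  bq_derivation_on_centre_general K a b c d e D hLeib hr hs ht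
end

section
/- In the algebra A_f associated to a ternary cubic f with coefficients a,b,c,a₂,a₃,b₁,b₃,c₁,c₂,m (with c ≠ 0), the element ξ = c²(xy)² − (cy²+c₂y+b₃)(cx²+c₁x+a₃) + (cm−c₁c₂)xy + a₃b₃ is central. -/
/-- The relations defining the algebra `A_f` associated to the ternary cubic
`f = A x³ + B y³ + C z³ + A₂ x²y + A₃ x²z + B₁ xy² + B₃ y²z + C₁ xz² + C₂ yz² + M xyz`
(with `C ≠ 0`): the relations derive from the identity `f(α, β, αx + βy) = 0`,
with generators `x = ι 0`, `y = ι 1`. -/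
def tcRel (K : Type*) [Field K] (A B C A2 A3 B1 B3 C1 C2 M : K) :
    FreeAlgebra K (Fin 2) → FreeAlgebra K (Fin 2) → Prop := fun u v =>
  letI x := FreeAlgebra.ι K (0 : Fin 2)
  letI y := FreeAlgebra.ι K (1 : Fin 2)
  letI c : K → FreeAlgebra K (Fin 2) := algebraMap K _
  v = 0 ∧ (
    u = c C * x ^ 3 + c C1 * x ^ 2 + c A3 * x + c A ∨
    u = c C * (x ^ 2 * y + x * y * x + y * x ^ 2) + c C1 * (x * y + y * x)
        + c C2 * x ^ 2 + c M * x + c A3 * y + c A2 ∨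
    u = c C * (x * y ^ 2 + y * x * y + y ^ 2 * x) + c C2 * (x * y + y * x)
        + c C1 * y ^ 2 + c M * y + c B3 * x + c B1 ∨
    u = c C * y ^ 3 + c C2 * y ^ 2 + c B3 * y + c B)

/-- The algebra `A_f` associated to a ternary cubic. -/
def TCAlg (K : Type*) [Field K] (A B C A2 A3 B1 B3 C1 C2 M : K) :=
  RingQuot (tcRel K A B C A2 A3 B1 B3 C1 C2 M)

noncomputable instance (K : Type*) [Field K] (A B C A2 A3 B1 B3 C1 C2 M : K) :
    Ring (TCAlg K A B C A2 A3 B1 B3 C1 C2 M) := inferInstanceAs (Ring (RingQuot _))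

noncomputable instance (K : Type*) [Field K] (A B C A2 A3 B1 B3 C1 C2 M : K) :
    Algebra K (TCAlg K A B C A2 A3 B1 B3 C1 C2 M) := inferInstanceAs (Algebra K (RingQuot _))

/-- The generator `x` of the ternary cubic algebra `A_f`. -/
noncomputable def tcX (K : Type*) [Field K] (A B C A2 A3 B1 B3 C1 C2 M : K) :
    TCAlg K A B C A2 A3 B1 B3 C1 C2 M :=
  RingQuot.mkAlgHom K _ (FreeAlgebra.ι K 0)

/-- The generator `y` of the ternary cubic algebra `A_f`. -/
noncomputable def tcY (K : Type*) [Field K] (A B C A2 A3 B1 B3 C1 C2 M : K) :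
    TCAlg K A B C A2 A3 B1 B3 C1 C2 M :=
  RingQuot.mkAlgHom K _ (FreeAlgebra.ι K 1)

/-- The central element `ξ` of the ternary cubic algebra. -/
noncomputable def tcXi (K : Type*) [Field K] (A B C A2 A3 B1 B3 C1 C2 M : K) :
    TCAlg K A B C A2 A3 B1 B3 C1 C2 M :=
  letI x := tcX K A B C A2 A3 B1 B3 C1 C2 M
  letI y := tcY K A B C A2 A3 B1 B3 C1 C2 M
  letI c : K → TCAlg K A B C A2 A3 B1 B3 C1 C2 M := algebraMap K _
  c (C ^ 2) * (x * y) ^ 2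
    - (c C * y ^ 2 + c C2 * y + c B3) * (c C * x ^ 2 + c C1 * x + c A3)
    + c (C * M - C1 * C2) * (x * y) + c (A3 * B3)

/-!
For any two elements `x`, `y` of a `K`-algebra, the commutators `⁅ξ, x⁆` and `⁅ξ, y⁆` are
identically combinations of brackets with the first three defining relations of `A_f`, so they
vanish in `A_f`. As `x` and `y` generate `A_f`, `ξ` is central.
-/

theorem RingQuot.commute_of_commute_mkAlgHom_ι {R X : Type*} [CommSemiring R]
    {r : FreeAlgebra R X → FreeAlgebra R X → Prop} {a : RingQuot r}
    (h : ∀ i, Commute a (mkAlgHom R r (FreeAlgebra.ι R i))) (z : RingQuot r) : Commute a z := by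
  obtain ⟨w, rfl⟩ := mkAlgHom_surjective R r z
  induction w using FreeAlgebra.induction with
  | grade0 c => simpa only [AlgHom.commutes] using Algebra.commute_algebraMap_right c a
  | grade1 i => exact h i
  | mul u v hu hv => simpa only [map_mul] using hu.mul_right hv
  | add u v hu hv => simpa only [map_add] using hu.add_right hv

namespace TernaryCubic

section Relations

variable {K R : Type*} [CommRing K] [Ring R] [Algebra K R]

-- `relIJ` is the coefficient of `α^I β^J` in `f(α, β, αx + βy)`, expanded noncommutatively.
def rel30 (A C A3 C1 : K) (x : R) : R := C • x ^ 3 + C1 • x ^ 2 + A3 • x + A • 1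

def rel21 (C A2 A3 C1 C2 M : K) (x y : R) : R :=
  C • (x ^ 2 * y + x * y * x + y * x ^ 2) + C1 • (x * y + y * x) + C2 • x ^ 2 + M • x
    + A3 • y + A2 • 1

def rel12 (C B1 B3 C1 C2 M : K) (x y : R) : R :=
  C • (x * y ^ 2 + y * x * y + y ^ 2 * x) + C2 • (x * y + y * x) + C1 • y ^ 2 + M • y
    + B3 • x + B1 • 1

def xi (C A3 B3 C1 C2 M : K) (x y : R) : R :=
  C ^ 2 • (x * y) ^ 2 - (C • y ^ 2 + C2 • y + B3 • 1) * (C • x ^ 2 + C1 • x + A3 • 1)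
    + (C * M - C1 * C2) • (x * y) + (A3 * B3) • 1

variable (A C A2 A3 B1 B3 C1 C2 M : K) (x y : R)

theorem lie_xi_left : ⁅xi C A3 B3 C1 C2 M x y, x⁆ =
    C • ⁅rel30 A C A3 C1 x, y ^ 2⁆ + C2 • ⁅rel30 A C A3 C1 x, y⁆
      + C • (x * ⁅y, rel21 C A2 A3 C1 C2 M x y⁆) := by
  simp only [xi, rel30, rel21, Ring.lie_def, mul_add, add_mul, mul_sub, sub_mul, smul_mul_assoc,
    mul_smul_comm, smul_smul, smul_add, smul_sub, mul_assoc, mul_one, one_mul, pow_succ, pow_zero]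
  module

theorem lie_xi_right : ⁅xi C A3 B3 C1 C2 M x y, y⁆ =
    C • ⁅y, ⁅y, rel21 C A2 A3 C1 C2 M x y⁆⁆
      + C • (⁅y * x, rel12 C B1 B3 C1 C2 M x y⁆ + x * ⁅y, rel12 C B1 B3 C1 C2 M x y⁆)
      + C1 • ⁅y, rel12 C B1 B3 C1 C2 M x y⁆ := by
  simp only [xi, rel21, rel12, Ring.lie_def, mul_add, add_mul, mul_sub, sub_mul, smul_mul_assoc,
    mul_smul_comm, smul_smul, smul_add, smul_sub, mul_assoc, mul_one, one_mul, pow_succ, pow_zero]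
  module

theorem commute_xi_left (h30 : rel30 A C A3 C1 x = 0) (h21 : rel21 C A2 A3 C1 C2 M x y = 0) :
    Commute (xi C A3 B3 C1 C2 M x y) x := by
  rw [commute_iff_lie_eq, lie_xi_left A C A2 A3 B3 C1 C2 M, h30, h21]
  simp [Ring.lie_def]

theorem commute_xi_right (h21 : rel21 C A2 A3 C1 C2 M x y = 0)
    (h12 : rel12 C B1 B3 C1 C2 M x y = 0) : Commute (xi C A3 B3 C1 C2 M x y) y := by
  rw [commute_iff_lie_eq, lie_xi_right C A2 A3 B1 B3 C1 C2 M, h21, h12]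
  simp [Ring.lie_def]

theorem map_rel30 {S : Type*} [Ring S] [Algebra K S] (f : R →ₐ[K] S) :
    f (rel30 A C A3 C1 x) = rel30 A C A3 C1 (f x) := by
  simp [rel30]

theorem map_rel21 {S : Type*} [Ring S] [Algebra K S] (f : R →ₐ[K] S) :
    f (rel21 C A2 A3 C1 C2 M x y) = rel21 C A2 A3 C1 C2 M (f x) (f y) := by
  simp [rel21]

theorem map_rel12 {S : Type*} [Ring S] [Algebra K S] (f : R →ₐ[K] S) :
    f (rel12 C B1 B3 C1 C2 M x y) = rel12 C B1 B3 C1 C2 M (f x) (f y) := by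
  simp [rel12]

end Relations

variable (K : Type*) [Field K] (A B C A2 A3 B1 B3 C1 C2 M : K)

theorem rel30_tcX : rel30 A C A3 C1 (tcX K A B C A2 A3 B1 B3 C1 C2 M) = 0 := by
  have h := RingQuot.mkAlgHom_rel K (s := tcRel K A B C A2 A3 B1 B3 C1 C2 M)
    (x := rel30 A C A3 C1 (FreeAlgebra.ι K 0)) (y := 0)
    ⟨rfl, Or.inl (by simp [rel30, Algebra.smul_def])⟩
  rwa [map_rel30, map_zero] at h

theorem rel21_tcX_tcY : rel21 C A2 A3 C1 C2 M
    (tcX K A B C A2 A3 B1 B3 C1 C2 M) (tcY K A B C A2 A3 B1 B3 C1 C2 M) = 0 := by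
  have h := RingQuot.mkAlgHom_rel K (s := tcRel K A B C A2 A3 B1 B3 C1 C2 M)
    (x := rel21 C A2 A3 C1 C2 M (FreeAlgebra.ι K 0) (FreeAlgebra.ι K 1)) (y := 0)
    ⟨rfl, Or.inr (Or.inl (by simp [rel21, Algebra.smul_def]))⟩
  rwa [map_rel21, map_zero] at h

theorem rel12_tcX_tcY : rel12 C B1 B3 C1 C2 M
    (tcX K A B C A2 A3 B1 B3 C1 C2 M) (tcY K A B C A2 A3 B1 B3 C1 C2 M) = 0 := by
  have h := RingQuot.mkAlgHom_rel K (s := tcRel K A B C A2 A3 B1 B3 C1 C2 M)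
    (x := rel12 C B1 B3 C1 C2 M (FreeAlgebra.ι K 0) (FreeAlgebra.ι K 1)) (y := 0)
    ⟨rfl, Or.inr (Or.inr (Or.inl (by simp [rel12, Algebra.smul_def])))⟩
  rwa [map_rel12, map_zero] at h

theorem tcXi_eq_xi : tcXi K A B C A2 A3 B1 B3 C1 C2 M =
    xi C A3 B3 C1 C2 M (tcX K A B C A2 A3 B1 B3 C1 C2 M) (tcY K A B C A2 A3 B1 B3 C1 C2 M) := by
  simp [tcXi, xi, Algebra.smul_def]

theorem commute_tcXi_tcX :
    Commute (tcXi K A B C A2 A3 B1 B3 C1 C2 M) (tcX K A B C A2 A3 B1 B3 C1 C2 M) := by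
  rw [tcXi_eq_xi]
  exact commute_xi_left A C A2 A3 B3 C1 C2 M _ _ (rel30_tcX ..) (rel21_tcX_tcY ..)

theorem commute_tcXi_tcY :
    Commute (tcXi K A B C A2 A3 B1 B3 C1 C2 M) (tcY K A B C A2 A3 B1 B3 C1 C2 M) := by
  rw [tcXi_eq_xi]
  exact commute_xi_right C A2 A3 B1 B3 C1 C2 M _ _ (rel21_tcX_tcY ..) (rel12_tcX_tcY ..)

end TernaryCubic

theorem tc_xi_central_general (K : Type*) [Field K]
    (A B C A2 A3 B1 B3 C1 C2 M : K) :
    ∀ z : TCAlg K A B C A2 A3 B1 B3 C1 C2 M,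
      tcXi K A B C A2 A3 B1 B3 C1 C2 M * z = z * tcXi K A B C A2 A3 B1 B3 C1 C2 M := by
  intro z
  refine (RingQuot.commute_of_commute_mkAlgHom_ι (fun i => ?_) z).eq
  fin_cases i
  · exact TernaryCubic.commute_tcXi_tcX ..
  · exact TernaryCubic.commute_tcXi_tcY ..

/-- In the algebra `A_f` associated to a ternary cubic with `C ≠ 0`, the element
`ξ = C²(xy)² − (Cy²+C₂y+B₃)(Cx²+C₁x+A₃) + (CM−C₁C₂)xy + A₃B₃` is central. -/
theorem tc_xi_central (K : Type*) [Field K] (h2 : (2 : K) ≠ 0) (h3 : (3 : K) ≠ 0)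
    (A B C A2 A3 B1 B3 C1 C2 M : K) (hC : C ≠ 0) :
    ∀ z : TCAlg K A B C A2 A3 B1 B3 C1 C2 M,
      tcXi K A B C A2 A3 B1 B3 C1 C2 M * z = z * tcXi K A B C A2 A3 B1 B3 C1 C2 M :=
  tc_xi_central_general K A B C A2 A3 B1 B3 C1 C2 M
end

section
/- There is a well-defined K-derivation D : A_f → A_f on the ternary cubic algebra A_f determined by D(x) = c[xy,x] and D(y) = c[y,yx]; i.e., these assignments annihilate the defining ideal of A_f. -/
/-!
Write `x, y` for the generators of `A_f` and `ρ₀, …, ρ₃` for its defining relators. The derivation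
is `D = C (ad(xy) + δ)`, where `δ` is the derivation with `δ x = 0` and `δ y = [y², x]`; indeed
`[xy, y] + [y², x] = [y, yx]`. The inner derivation `ad(xy)` exists on any algebra, so only `δ` has
to be checked against the relators. Since the `ρₖ` are the coefficients of a single cubic in
`αx + βy`, they are polarizations of one another: the derivative of `ρₖ₊₁` in `y` in a direction
`e` is the derivative of `ρₖ` in `x` in the direction `e`. For `e = [y², x]` the latter is
`[y², ρₖ]`, because `ad(y²)` kills `y`. Hence `δ ρ₀ = 0` and `δ ρₖ₊₁ = [y², ρₖ]`, and both vanish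
in `A_f`.
-/
open TrivSqZeroExt

namespace LinearMap

variable {K R : Type*} [CommRing K] [Ring R] [Algebra K R]

def IsLeibniz (D : R →ₗ[K] R) : Prop := ∀ u v, D (u * v) = D u * v + u * D v

theorem IsLeibniz.add {D D' : R →ₗ[K] R} (hD : D.IsLeibniz) (hD' : D'.IsLeibniz) :
    (D + D').IsLeibniz := fun u v => by
  simp only [add_apply, hD u v, hD' u v, add_mul, mul_add]; abel

theorem IsLeibniz.smul {D : R →ₗ[K] R} (hD : D.IsLeibniz) (c : K) : (c • D).IsLeibniz :=
  fun u v => by simp only [smul_apply, hD u v, smul_add, smul_mul_assoc, mul_smul_comm]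

theorem isLeibniz_mulLeft_sub_mulRight (z : R) : (mulLeft K z - mulRight K z).IsLeibniz :=
  fun u v => by simp only [sub_apply, mulLeft_apply, mulRight_apply]; noncomm_ring

theorem isLeibniz_of_fst_eq (φ : R →ₐ[K] TrivSqZeroExt R R) (hφ : ∀ a, (φ a).fst = a) :
    ((sndHom R R).restrictScalars K ∘ₗ φ.toLinearMap).IsLeibniz := fun u v => by
  simp [snd_mul, hφ, add_comm]

end LinearMap

namespace FreeAlgebra

variable {K R X : Type*} [CommRing K] [Ring R] [Algebra K R]

/-- `(dualLift f d w).snd` is the derivative of `f w` when the generators move in the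
directions `d`. -/
noncomputable def dualLift (f : FreeAlgebra K X →ₐ[K] R) (d : X → R) :
    FreeAlgebra K X →ₐ[K] TrivSqZeroExt R R :=
  lift K fun i => inl (f (ι K i)) + inr (d i)

theorem dualLift_ι (f : FreeAlgebra K X →ₐ[K] R) (d : X → R) (i : X) :
    dualLift f d (ι K i) = inl (f (ι K i)) + inr (d i) :=
  lift_ι_apply _ _

theorem fst_dualLift (f : FreeAlgebra K X →ₐ[K] R) (d : X → R) (w : FreeAlgebra K X) :
    (dualLift f d w).fst = f w := by
  have : (fstHom K R R).comp (dualLift f d) = f := by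
    ext i; simp [dualLift_ι]
  exact AlgHom.congr_fun this w

theorem snd_dualLift_commutator (f : FreeAlgebra K X →ₐ[K] R) (z : R) (w : FreeAlgebra K X) :
    (dualLift f (fun i => z * f (ι K i) - f (ι K i) * z) w).snd = z * f w - f w * z := by
  induction w using FreeAlgebra.induction with
  | grade0 c => simp [algebraMap_eq_inl', Algebra.commutes]
  | grade1 i => simp [dualLift_ι]
  | add a b ha hb => simp only [map_add, snd_add, ha, hb]; noncomm_ring
  | mul a b ha hb =>
    simp only [map_mul, snd_mul, ha, hb, fst_dualLift, smul_eq_mul, MulOpposite.smul_eq_mul_unop,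
      MulOpposite.unop_op]
    noncomm_ring

end FreeAlgebra

open FreeAlgebra in
theorem RingQuot.exists_isLeibniz_of_snd_dualLift {K X : Type*} [CommRing K]
    {r : FreeAlgebra K X → FreeAlgebra K X → Prop} (d : X → RingQuot r)
    (hd : ∀ ⦃u v⦄, r u v →
      (dualLift (mkAlgHom K r) d u).snd = (dualLift (mkAlgHom K r) d v).snd) :
    ∃ D : RingQuot r →ₗ[K] RingQuot r, D.IsLeibniz ∧ ∀ i, D (mkAlgHom K r (ι K i)) = d i := by
  have hcompat : ∀ ⦃u v⦄, r u v → dualLift (mkAlgHom K r) d u = dualLift (mkAlgHom K r) d v :=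
    fun u v h => TrivSqZeroExt.ext (by simp only [fst_dualLift, mkAlgHom_rel K h]) (hd h)
  set φ := liftAlgHom K ⟨dualLift (mkAlgHom K r) d, hcompat⟩
  have hφ : ∀ w, φ (mkAlgHom K r w) = dualLift (mkAlgHom K r) d w :=
    fun w => liftAlgHom_mkAlgHom_apply K _ _ w
  have hfst : ∀ a, (φ a).fst = a := by
    intro a
    obtain ⟨w, rfl⟩ := mkAlgHom_surjective K r a
    rw [hφ, fst_dualLift]
  refine ⟨_, LinearMap.isLeibniz_of_fst_eq φ hfst, fun i => ?_⟩
  simp [hφ, dualLift_ι]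

section Relators

variable {K R : Type*} [CommRing K] [Ring R] [Algebra K R] (A B C A2 A3 B1 B3 C1 C2 M : K)

-- `tcRelator … x y k` is the coefficient of `α^(3-k) β^k` in `f(α, β, αx + βy)`.
def tcRelator (x y : R) : Fin 4 → R :=
  letI c : K → R := algebraMap K R
  ![c C * x ^ 3 + c C1 * x ^ 2 + c A3 * x + c A,
    c C * (x ^ 2 * y + x * y * x + y * x ^ 2) + c C1 * (x * y + y * x)
      + c C2 * x ^ 2 + c M * x + c A3 * y + c A2,
    c C * (x * y ^ 2 + y * x * y + y ^ 2 * x) + c C2 * (x * y + y * x)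
      + c C1 * y ^ 2 + c M * y + c B3 * x + c B1,
    c C * y ^ 3 + c C2 * y ^ 2 + c B3 * y + c B]

theorem map_tcRelator {S : Type*} [Ring S] [Algebra K S] (f : R →ₐ[K] S) (x y : R) (k : Fin 4) :
    f (tcRelator A B C A2 A3 B1 B3 C1 C2 M x y k) =
      tcRelator A B C A2 A3 B1 B3 C1 C2 M (f x) (f y) k := by
  fin_cases k <;> simp [tcRelator]

theorem snd_tcRelator_zero (x y e : R) :
    (tcRelator A B C A2 A3 B1 B3 C1 C2 M (inl x) (inl y + inr e) 0).snd = 0 := by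
  simp [tcRelator, algebraMap_eq_inl', ← inl_mul]

theorem snd_tcRelator_succ (x y e : R) (k : Fin 3) :
    (tcRelator A B C A2 A3 B1 B3 C1 C2 M (inl x) (inl y + inr e) k.succ).snd =
      (tcRelator A B C A2 A3 B1 B3 C1 C2 M (inl x + inr e) (inl y) k.castSucc).snd := by
  fin_cases k <;> simp [tcRelator, pow_succ, algebraMap_eq_inl'] <;>
    simp only [mul_add, mul_assoc] <;> abel

end Relators

theorem tcRel_iff (K : Type*) [Field K] (A B C A2 A3 B1 B3 C1 C2 M : K)
    (u v : FreeAlgebra K (Fin 2)) :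
    tcRel K A B C A2 A3 B1 B3 C1 C2 M u v ↔
      v = 0 ∧ ∃ k, u = tcRelator A B C A2 A3 B1 B3 C1 C2 M
        (FreeAlgebra.ι K (0 : Fin 2)) (FreeAlgebra.ι K 1) k := by
  simp [tcRel, tcRelator, Fin.exists_fin_succ]

open FreeAlgebra in
theorem exists_isLeibniz_tcX_tcY (K : Type*) [Field K] (A B C A2 A3 B1 B3 C1 C2 M : K) :
    ∃ δ : TCAlg K A B C A2 A3 B1 B3 C1 C2 M →ₗ[K] TCAlg K A B C A2 A3 B1 B3 C1 C2 M,
      δ.IsLeibniz ∧ δ (tcX K A B C A2 A3 B1 B3 C1 C2 M) = 0 ∧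
        δ (tcY K A B C A2 A3 B1 B3 C1 C2 M) =
          tcY K A B C A2 A3 B1 B3 C1 C2 M ^ 2 * tcX K A B C A2 A3 B1 B3 C1 C2 M -
            tcX K A B C A2 A3 B1 B3 C1 C2 M * tcY K A B C A2 A3 B1 B3 C1 C2 M ^ 2 := by
  set r := tcRel K A B C A2 A3 B1 B3 C1 C2 M
  set f := RingQuot.mkAlgHom K r
  set ρ := tcRelator A B C A2 A3 B1 B3 C1 C2 M (ι K (0 : Fin 2)) (ι K 1)
  set x := f (ι K 0)
  set y := f (ι K 1)
  have hρ : ∀ k, tcRelator A B C A2 A3 B1 B3 C1 C2 M x y k = 0 := fun k => by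
    rw [← map_tcRelator, RingQuot.mkAlgHom_rel K ((tcRel_iff ..).2 ⟨rfl, k, rfl⟩), map_zero]
  have hy : y ^ 2 * y - y * y ^ 2 = 0 := sub_eq_zero.2 (pow_mul_comm' y 2)
  have hδρ : ∀ k, (dualLift f ![0, y ^ 2 * x - x * y ^ 2] (ρ k)).snd = 0 := by
    intro k
    rw [map_tcRelator, dualLift_ι, dualLift_ι]
    simp only [Matrix.cons_val_zero, Matrix.cons_val_one, Matrix.cons_val_fin_one, inr_zero, add_zero]
    refine Fin.cases (snd_tcRelator_zero ..) (fun k => ?_) k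
    have h := snd_dualLift_commutator f (y ^ 2) (ρ k.castSucc)
    rw [map_tcRelator, dualLift_ι, dualLift_ι, map_tcRelator, hρ, hy, inr_zero, add_zero,
      mul_zero, zero_mul, sub_zero] at h
    rw [snd_tcRelator_succ]
    exact h
  have hd : ∀ ⦃u v⦄, r u v → (dualLift f ![0, y ^ 2 * x - x * y ^ 2] u).snd =
      (dualLift f ![0, y ^ 2 * x - x * y ^ 2] v).snd := by
    rintro u v huv
    obtain ⟨rfl, k, rfl⟩ := (tcRel_iff ..).1 huv
    rw [map_zero, snd_zero]
    exact hδρ k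
  obtain ⟨δ, hδ, hδι⟩ := RingQuot.exists_isLeibniz_of_snd_dualLift _ hd
  exact ⟨δ, hδ, hδι 0, hδι 1⟩

theorem tc_derivation_exists_general (K : Type*) [Field K]
    (A B C A2 A3 B1 B3 C1 C2 M : K) :
    letI x := tcX K A B C A2 A3 B1 B3 C1 C2 M
    letI y := tcY K A B C A2 A3 B1 B3 C1 C2 M
    ∃ D : TCAlg K A B C A2 A3 B1 B3 C1 C2 M →ₗ[K] TCAlg K A B C A2 A3 B1 B3 C1 C2 M,
      (∀ u v, D (u * v) = D u * v + u * D v) ∧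
      D x = algebraMap K _ C * ((x * y) * x - x * (x * y)) ∧
      D y = algebraMap K _ C * (y * (y * x) - (y * x) * y) := by
  obtain ⟨δ, hδ, hδx, hδy⟩ := exists_isLeibniz_tcX_tcY K A B C A2 A3 B1 B3 C1 C2 M
  set x := tcX K A B C A2 A3 B1 B3 C1 C2 M
  set y := tcY K A B C A2 A3 B1 B3 C1 C2 M
  refine ⟨C • (LinearMap.mulLeft K (x * y) - LinearMap.mulRight K (x * y) + δ),
    ((LinearMap.isLeibniz_mulLeft_sub_mulRight _).add hδ).smul C, ?_, ?_⟩
  · rw [LinearMap.smul_apply, Algebra.smul_def]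
    simp only [LinearMap.add_apply, LinearMap.sub_apply, LinearMap.mulLeft_apply,
      LinearMap.mulRight_apply, hδx, add_zero]
  · rw [LinearMap.smul_apply, Algebra.smul_def]
    simp only [LinearMap.add_apply, LinearMap.sub_apply, LinearMap.mulLeft_apply,
      LinearMap.mulRight_apply, hδy]
    noncomm_ring

/-- There is a well-defined `K`-derivation `D` on the ternary cubic algebra `A_f`
determined by `D x = C[xy,x]` and `D y = C[y,yx]`. -/
theorem tc_derivation_exists (K : Type*) [Field K] (h2 : (2 : K) ≠ 0) (h3 : (3 : K) ≠ 0)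
    (A B C A2 A3 B1 B3 C1 C2 M : K) (hC : C ≠ 0) :
    letI x := tcX K A B C A2 A3 B1 B3 C1 C2 M
    letI y := tcY K A B C A2 A3 B1 B3 C1 C2 M
    ∃ D : TCAlg K A B C A2 A3 B1 B3 C1 C2 M →ₗ[K] TCAlg K A B C A2 A3 B1 B3 C1 C2 M,
      (∀ u v, D (u * v) = D u * v + u * D v) ∧
      D x = algebraMap K _ C * ((x * y) * x - x * (x * y)) ∧
      D y = algebraMap K _ C * (y * (y * x) - (y * x) * y) :=
  tc_derivation_exists_general K A B C A2 A3 B1 B3 C1 C2 M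
end

section
/- Let f and f' be binary quartics with f'(x,z) = λ²f(m₁₁x+m₂₁z, m₁₂x+m₂₂z) for λ ∈ K^× and M = (m_{ij}) ∈ GL₂(K). Then the map ψ : A_{f'} → A_f given by r ↦ λ(m₁₁²r + m₁₁m₁₂s + m₁₂²t), s ↦ λ(2m₁₁m₂₁r + (m₁₁m₂₂+m₁₂m₂₁)s + 2m₁₂m₂₂t), t ↦ λ(m₂₁²r + m₂₁m₂₂s + m₂₂²t) is a well-defined K-algebra isomorphism. -/
open Matrix

section SubstMatrix

variable {K : Type*} [CommRing K]

/- The matrix of `q ↦ q(m₁₁x + m₂₁z, m₁₂x + m₂₂z)`, where `mᵢⱼ = M (i-1) (j-1)`, on binary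
quadratic forms in the coordinates `(x², xz, z²)`; `quarticSubstMatrix` is the same for binary
quartics in the coordinates `(x⁴, x³z, x²z², xz³, z⁴)`. -/
def quadSubstMatrix (M : Matrix (Fin 2) (Fin 2) K) : Matrix (Fin 3) (Fin 3) K :=
  let p := M 0 0; let q := M 0 1; let r := M 1 0; let s := M 1 1
  !![p ^ 2, p * q, q ^ 2;
     2 * p * r, p * s + q * r, 2 * q * s;
     r ^ 2, r * s, s ^ 2]

def quarticSubstMatrix (M : Matrix (Fin 2) (Fin 2) K) : Matrix (Fin 5) (Fin 5) K :=
  let p := M 0 0; let q := M 0 1; let r := M 1 0; let s := M 1 1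
  !![p ^ 4, p ^ 3 * q, p ^ 2 * q ^ 2, p * q ^ 3, q ^ 4;
     4 * p ^ 3 * r, 3 * p ^ 2 * q * r + p ^ 3 * s, 2 * p * q ^ 2 * r + 2 * p ^ 2 * q * s,
       q ^ 3 * r + 3 * p * q ^ 2 * s, 4 * q ^ 3 * s;
     6 * p ^ 2 * r ^ 2, 3 * p * q * r ^ 2 + 3 * p ^ 2 * r * s,
       q ^ 2 * r ^ 2 + 4 * p * q * r * s + p ^ 2 * s ^ 2, 3 * q ^ 2 * r * s + 3 * p * q * s ^ 2,
       6 * q ^ 2 * s ^ 2;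
     4 * p * r ^ 3, q * r ^ 3 + 3 * p * r ^ 2 * s, 2 * q * r ^ 2 * s + 2 * p * r * s ^ 2,
       3 * q * r * s ^ 2 + p * s ^ 3, 4 * q * s ^ 3;
     r ^ 4, r ^ 3 * s, r ^ 2 * s ^ 2, r * s ^ 3, s ^ 4]

theorem quadSubstMatrix_mul (M N : Matrix (Fin 2) (Fin 2) K) :
    quadSubstMatrix (M * N) = quadSubstMatrix M * quadSubstMatrix N := by
  ext i j
  fin_cases i <;> fin_cases j <;>
    simp only [quadSubstMatrix, mul_apply, Fin.sum_univ_two, Fin.sum_univ_three, Fin.zero_eta,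
      Fin.mk_one, Fin.reduceFinMk, of_apply, cons_val', cons_val, cons_val_fin_one] <;> ring

theorem quadSubstMatrix_one : quadSubstMatrix (1 : Matrix (Fin 2) (Fin 2) K) = 1 := by
  ext i j
  fin_cases i <;> fin_cases j <;> simp [quadSubstMatrix]

theorem quarticSubstMatrix_mul (M N : Matrix (Fin 2) (Fin 2) K) :
    quarticSubstMatrix (M * N) = quarticSubstMatrix M * quarticSubstMatrix N := by
  ext i j
  fin_cases i <;> fin_cases j <;>
    simp only [quarticSubstMatrix, mul_apply, Fin.sum_univ_two, Fin.sum_univ_five, Fin.zero_eta,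
      Fin.mk_one, Fin.reduceFinMk, of_apply, cons_val', cons_val, cons_val_fin_one] <;> ring

theorem quarticSubstMatrix_one : quarticSubstMatrix (1 : Matrix (Fin 2) (Fin 2) K) = 1 := by
  ext i j
  fin_cases i <;> fin_cases j <;> simp [quarticSubstMatrix]

end SubstMatrix

section Inverse

variable {K : Type*} [Field K] {lam : K} {M : Matrix (Fin 2) (Fin 2) K}

theorem inv_smul_quadSubstMatrix_inv_mul (hlam : lam ≠ 0) (hM : IsUnit M.det) :
    (lam⁻¹ • quadSubstMatrix M⁻¹) * (lam • quadSubstMatrix M) = 1 := by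
  rw [smul_mul_smul_comm, ← quadSubstMatrix_mul, nonsing_inv_mul _ hM, quadSubstMatrix_one,
    inv_mul_cancel₀ hlam, one_smul]

theorem smul_quadSubstMatrix_mul_inv (hlam : lam ≠ 0) (hM : IsUnit M.det) :
    (lam • quadSubstMatrix M) * (lam⁻¹ • quadSubstMatrix M⁻¹) = 1 := by
  rw [smul_mul_smul_comm, ← quadSubstMatrix_mul, mul_nonsing_inv _ hM, quadSubstMatrix_one,
    mul_inv_cancel₀ hlam, one_smul]

theorem eq_inv_smul_quarticSubstMatrix_inv_mulVec (hlam : lam ≠ 0) (hM : IsUnit M.det)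
    {f f' : Fin 5 → K} (hf : f' = (lam ^ 2 • quarticSubstMatrix M) *ᵥ f) :
    f = (lam⁻¹ ^ 2 • quarticSubstMatrix M⁻¹) *ᵥ f' := by
  rw [hf, mulVec_mulVec, smul_mul_smul_comm, ← quarticSubstMatrix_mul, nonsing_inv_mul _ hM,
    quarticSubstMatrix_one, ← mul_pow, inv_mul_cancel₀ hlam, one_pow, one_smul, one_mulVec]

end Inverse

section QuadSq

variable {K : Type*} [CommRing K] {A B : Type*} [Ring A] [Algebra K A] [Ring B] [Algebra K B]

/- The coefficients of `(v₀x² + v₁xz + v₂z²)²` in the coordinates `(x⁴, x³z, x²z², xz³, z⁴)`,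
for central indeterminates `x, z`: the relations of `A_f` say that this is `f`. -/
def quadSqCoeffs {R : Type*} [Mul R] [Add R] (v : Fin 3 → R) : Fin 5 → R :=
  ![v 0 * v 0, v 0 * v 1 + v 1 * v 0, v 0 * v 2 + v 2 * v 0 + v 1 * v 1, v 1 * v 2 + v 2 * v 1,
    v 2 * v 2]

theorem map_quadSqCoeffs {F : Type*} [FunLike F A B] [RingHomClass F A B] (φ : F)
    (v : Fin 3 → A) : φ ∘ quadSqCoeffs v = quadSqCoeffs (φ ∘ v) := by
  ext i
  fin_cases i <;> simp [quadSqCoeffs]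

theorem quadSqCoeffs_mulVec (lam : K) (M : Matrix (Fin 2) (Fin 2) K) (v : Fin 3 → A) :
    quadSqCoeffs ((lam • quadSubstMatrix M).map (algebraMap K A) *ᵥ v) =
      (lam ^ 2 • quarticSubstMatrix M).map (algebraMap K A) *ᵥ quadSqCoeffs v := by
  ext i
  fin_cases i <;>
    simp only [quadSqCoeffs, quadSubstMatrix, quarticSubstMatrix, mulVec, dotProduct,
      Fin.sum_univ_three, Fin.sum_univ_five, map_apply, Matrix.smul_apply, smul_eq_mul,
      Fin.zero_eta, Fin.mk_one, Fin.reduceFinMk, of_apply, cons_val', cons_val, cons_val_fin_one,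
      ← Algebra.smul_def, add_mul, mul_add, smul_mul_assoc, mul_smul_comm, smul_smul, smul_add] <;>
    module

theorem AlgHom.comp_mulVec_map_algebraMap {m n : Type*} [Fintype n] (φ : A →ₐ[K] B)
    (P : Matrix m n K) (v : n → A) :
    φ ∘ (P.map (algebraMap K A) *ᵥ v) = P.map (algebraMap K B) *ᵥ (φ ∘ v) := by
  ext i
  have h := RingHom.map_mulVec (φ : A →+* B) (P.map (algebraMap K A)) v i
  rw [Matrix.map_map] at h
  simpa [Function.comp_def] using h

end QuadSq

namespace BQAlg

variable {K : Type*} [Field K] {A : Type*} [Ring A] [Algebra K A] {a b c d e : K}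

theorem bqRel_iff {x y : FreeAlgebra K (Fin 3)} :
    bqRel K a b c d e x y ↔
      y = 0 ∧ ∃ i, x = quadSqCoeffs (FreeAlgebra.ι K) i - algebraMap K _ (![a, b, c, d, e] i) := by
  simp [bqRel, quadSqCoeffs, Fin.exists_fin_succ]

variable (K a b c d e) in
noncomputable def gen : Fin 3 → BQAlg K a b c d e :=
  ![bqR K a b c d e, bqS K a b c d e, bqT K a b c d e]

theorem gen_apply (i : Fin 3) :
    gen K a b c d e i = RingQuot.mkAlgHom K (bqRel K a b c d e) (FreeAlgebra.ι K i) := by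
  fin_cases i <;> rfl

theorem quadSqCoeffs_gen :
    quadSqCoeffs (gen K a b c d e) = algebraMap K (BQAlg K a b c d e) ∘ ![a, b, c, d, e] := by
  have hgen : gen K a b c d e = RingQuot.mkAlgHom K (bqRel K a b c d e) ∘ FreeAlgebra.ι K :=
    funext gen_apply
  ext i
  have h := RingQuot.mkAlgHom_rel K (bqRel_iff.2 ⟨rfl, i, rfl⟩ : bqRel K a b c d e _ 0)
  rw [map_zero, map_sub, AlgHom.commutes, sub_eq_zero,
    ← Function.comp_apply (f := RingQuot.mkAlgHom K _), map_quadSqCoeffs, ← hgen] at h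
  exact h

theorem lift_rel {v : Fin 3 → A} (hv : quadSqCoeffs v = algebraMap K A ∘ ![a, b, c, d, e])
    ⦃x y : FreeAlgebra K (Fin 3)⦄ (h : bqRel K a b c d e x y) :
    FreeAlgebra.lift K v x = FreeAlgebra.lift K v y := by
  obtain ⟨rfl, i, rfl⟩ := bqRel_iff.1 h
  rw [map_zero, map_sub, AlgHom.commutes, sub_eq_zero,
    ← Function.comp_apply (f := FreeAlgebra.lift K v), map_quadSqCoeffs, FreeAlgebra.ι_comp_lift,
    hv, Function.comp_apply]

noncomputable def lift (v : Fin 3 → A) (hv : quadSqCoeffs v = algebraMap K A ∘ ![a, b, c, d, e]) :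
    BQAlg K a b c d e →ₐ[K] A :=
  RingQuot.liftAlgHom K ⟨FreeAlgebra.lift K v, lift_rel hv⟩

theorem lift_comp_gen (v : Fin 3 → A) (hv : quadSqCoeffs v = algebraMap K A ∘ ![a, b, c, d, e]) :
    lift v hv ∘ gen K a b c d e = v := by
  ext i
  rw [Function.comp_apply, gen_apply]
  exact (RingQuot.liftAlgHom_mkAlgHom_apply K _ _ _).trans (FreeAlgebra.lift_ι_apply _ _)

theorem algHom_ext {φ ψ : BQAlg K a b c d e →ₐ[K] A}
    (h : φ ∘ gen K a b c d e = ψ ∘ gen K a b c d e) : φ = ψ := by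
  refine RingQuot.ringQuot_ext' K _ _ (FreeAlgebra.hom_ext ?_)
  ext i
  have hi := congrFun h i
  rwa [Function.comp_apply, Function.comp_apply, gen_apply] at hi

variable {a' b' c' d' e' a'' b'' c'' d'' e'' lam mu : K} {M N : Matrix (Fin 2) (Fin 2) K}

noncomputable def coordChange (lam : K) (M : Matrix (Fin 2) (Fin 2) K)
    (hf : ![a', b', c', d', e'] = (lam ^ 2 • quarticSubstMatrix M) *ᵥ ![a, b, c, d, e]) :
    BQAlg K a' b' c' d' e' →ₐ[K] BQAlg K a b c d e :=
  lift ((lam • quadSubstMatrix M).map (algebraMap K _) *ᵥ gen K a b c d e) <| by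
    rw [quadSqCoeffs_mulVec, quadSqCoeffs_gen, hf]
    ext i
    exact (RingHom.map_mulVec (algebraMap K _) _ _ i).symm

theorem coordChange_comp_gen
    (hf : ![a', b', c', d', e'] = (lam ^ 2 • quarticSubstMatrix M) *ᵥ ![a, b, c, d, e]) :
    coordChange lam M hf ∘ gen K a' b' c' d' e' =
      (lam • quadSubstMatrix M).map (algebraMap K _) *ᵥ gen K a b c d e :=
  lift_comp_gen _ _

theorem coordChange_comp_coordChange_comp_gen
    (hf : ![a', b', c', d', e'] = (lam ^ 2 • quarticSubstMatrix M) *ᵥ ![a, b, c, d, e])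
    (hg : ![a'', b'', c'', d'', e''] = (mu ^ 2 • quarticSubstMatrix N) *ᵥ ![a', b', c', d', e']) :
    coordChange lam M hf ∘ coordChange mu N hg ∘ gen K a'' b'' c'' d'' e'' =
      ((mu • quadSubstMatrix N) * (lam • quadSubstMatrix M)).map (algebraMap K _) *ᵥ
        gen K a b c d e := by
  rw [coordChange_comp_gen, AlgHom.comp_mulVec_map_algebraMap, coordChange_comp_gen,
    mulVec_mulVec, Matrix.map_mul]

noncomputable def coordChangeEquiv (hlam : lam ≠ 0) (hM : IsUnit M.det)
    (hf : ![a', b', c', d', e'] = (lam ^ 2 • quarticSubstMatrix M) *ᵥ ![a, b, c, d, e]) :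
    BQAlg K a' b' c' d' e' ≃ₐ[K] BQAlg K a b c d e :=
  let hf_symm := eq_inv_smul_quarticSubstMatrix_inv_mulVec hlam hM hf
  AlgEquiv.ofAlgHom (coordChange lam M hf) (coordChange lam⁻¹ M⁻¹ hf_symm)
    (algHom_ext <| by
      rw [AlgHom.coe_comp, Function.comp_assoc, coordChange_comp_coordChange_comp_gen,
        inv_smul_quadSubstMatrix_inv_mul hlam hM, Matrix.map_one _ (map_zero _) (map_one _),
        one_mulVec, AlgHom.coe_id, Function.id_comp])
    (algHom_ext <| by
      rw [AlgHom.coe_comp, Function.comp_assoc, coordChange_comp_coordChange_comp_gen,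
        smul_quadSubstMatrix_mul_inv hlam hM, Matrix.map_one _ (map_zero _) (map_one _),
        one_mulVec, AlgHom.coe_id, Function.id_comp])

theorem coordChangeEquiv_gen (hlam : lam ≠ 0) (hM : IsUnit M.det)
    (hf : ![a', b', c', d', e'] = (lam ^ 2 • quarticSubstMatrix M) *ᵥ ![a, b, c, d, e])
    (i : Fin 3) :
    coordChangeEquiv hlam hM hf (gen K a' b' c' d' e' i) =
      ((lam • quadSubstMatrix M).map (algebraMap K _) *ᵥ gen K a b c d e) i :=
  congrFun (coordChange_comp_gen hf) i

end BQAlg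

section BinaryQuartic

open MvPolynomial

variable {K : Type*} [CommRing K]

noncomputable def binaryQuartic (f : Fin 5 → K) : MvPolynomial (Fin 2) K :=
  C (f 0) * X 0 ^ 4 + C (f 1) * X 0 ^ 3 * X 1 + C (f 2) * X 0 ^ 2 * X 1 ^ 2
    + C (f 3) * X 0 * X 1 ^ 3 + C (f 4) * X 1 ^ 4

theorem coeff_binaryQuartic (f : Fin 5 → K) (i : Fin 5) :
    coeff (Finsupp.single 0 (4 - (i : ℕ)) + Finsupp.single 1 (i : ℕ)) (binaryQuartic f) = f i := by
  fin_cases i <;>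
    simp [binaryQuartic, X, monomial_pow, monomial_mul, coeff_monomial, C_mul_monomial,
      Finsupp.ext_iff, Fin.forall_fin_two, Finsupp.single_apply]

theorem binaryQuartic_injective : Function.Injective (binaryQuartic (K := K)) := fun f g h =>
  funext fun i => by rw [← coeff_binaryQuartic f, h, coeff_binaryQuartic]

theorem binaryQuartic_smul (c : K) (f : Fin 5 → K) :
    binaryQuartic (c • f) = C c * binaryQuartic f := by
  simp only [binaryQuartic, Pi.smul_apply, smul_eq_mul, map_mul]
  ring

noncomputable def linSubst (M : Matrix (Fin 2) (Fin 2) K) : Fin 2 → MvPolynomial (Fin 2) K :=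
  fun j => C (M 0 j) * X 0 + C (M 1 j) * X 1

theorem aeval_linSubst_binaryQuartic (M : Matrix (Fin 2) (Fin 2) K) (f : Fin 5 → K) :
    aeval (linSubst M) (binaryQuartic f) = binaryQuartic (quarticSubstMatrix M *ᵥ f) := by
  simp only [binaryQuartic, linSubst, quarticSubstMatrix, map_add, map_mul, map_pow, map_ofNat,
    aeval_C, aeval_X, algebraMap_eq, mulVec, dotProduct, Fin.sum_univ_five, of_apply, cons_val',
    cons_val, cons_val_fin_one]
  ring

end BinaryQuartic

open MvPolynomial in
theorem bq_change_of_coords_general (K : Type*) [Field K]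
    (a b c d e a' b' c' d' e' lam m₁₁ m₁₂ m₂₁ m₂₂ : K)
    (hlam : lam ≠ 0) (hM : m₁₁ * m₂₂ - m₁₂ * m₂₁ ≠ 0)
    (hf' :
      (C a' * (X 0) ^ 4 + C b' * (X 0) ^ 3 * (X 1) + C c' * (X 0) ^ 2 * (X 1) ^ 2
        + C d' * (X 0) * (X 1) ^ 3 + C e' * (X 1) ^ 4 : MvPolynomial (Fin 2) K) =
      C (lam ^ 2) *
        (C a * (C m₁₁ * X 0 + C m₂₁ * X 1) ^ 4
          + C b * (C m₁₁ * X 0 + C m₂₁ * X 1) ^ 3 * (C m₁₂ * X 0 + C m₂₂ * X 1)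
          + C c * (C m₁₁ * X 0 + C m₂₁ * X 1) ^ 2 * (C m₁₂ * X 0 + C m₂₂ * X 1) ^ 2
          + C d * (C m₁₁ * X 0 + C m₂₁ * X 1) * (C m₁₂ * X 0 + C m₂₂ * X 1) ^ 3
          + C e * (C m₁₂ * X 0 + C m₂₂ * X 1) ^ 4)) :
    letI r := bqR K a b c d e
    letI s := bqS K a b c d e
    letI t := bqT K a b c d e
    letI α : K → BQAlg K a b c d e := algebraMap K _
    ∃ ψ : BQAlg K a' b' c' d' e' ≃ₐ[K] BQAlg K a b c d e,
      ψ (bqR K a' b' c' d' e') =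
        α lam * (α (m₁₁ ^ 2) * r + α (m₁₁ * m₁₂) * s + α (m₁₂ ^ 2) * t) ∧
      ψ (bqS K a' b' c' d' e') =
        α lam * (α (2 * m₁₁ * m₂₁) * r + α (m₁₁ * m₂₂ + m₁₂ * m₂₁) * s
          + α (2 * m₁₂ * m₂₂) * t) ∧
      ψ (bqT K a' b' c' d' e') =
        α lam * (α (m₂₁ ^ 2) * r + α (m₂₁ * m₂₂) * s + α (m₂₂ ^ 2) * t) := by
  set M : Matrix (Fin 2) (Fin 2) K := !![m₁₁, m₁₂; m₂₁, m₂₂]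
  have hdet : IsUnit M.det := by
    rw [Matrix.det_fin_two_of]
    exact hM.isUnit
  have hcoeff : ![a', b', c', d', e'] = (lam ^ 2 • quarticSubstMatrix M) *ᵥ ![a, b, c, d, e] := by
    refine binaryQuartic_injective ?_
    rw [smul_mulVec, binaryQuartic_smul, ← aeval_linSubst_binaryQuartic]
    simpa [binaryQuartic, linSubst, M] using hf'
  have hψ := BQAlg.coordChangeEquiv_gen hlam hdet hcoeff
  refine ⟨BQAlg.coordChangeEquiv hlam hdet hcoeff, (hψ 0).trans ?_, (hψ 1).trans ?_,
    (hψ 2).trans ?_⟩ <;>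
  simp [M, quadSubstMatrix, mulVec, dotProduct, Fin.sum_univ_three, BQAlg.gen, mul_add, add_mul,
    mul_assoc]

open MvPolynomial in
/-- Let `f` and `f'` be binary quartics with `f'(x,z) = λ²f(m₁₁x+m₂₁z, m₁₂x+m₂₂z)` for
`λ ∈ K^×` and `M = (mᵢⱼ) ∈ GL₂(K)`.  Then `r ↦ λ(m₁₁²r + m₁₁m₁₂s + m₁₂²t)`,
`s ↦ λ(2m₁₁m₂₁r + (m₁₁m₂₂+m₁₂m₂₁)s + 2m₁₂m₂₂t)`, `t ↦ λ(m₂₁²r + m₂₁m₂₂s + m₂₂²t)`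
defines a `K`-algebra isomorphism `ψ : A_{f'} → A_f`. -/
theorem bq_change_of_coords (K : Type*) [Field K] (h2 : (2 : K) ≠ 0) (h3 : (3 : K) ≠ 0)
    (a b c d e a' b' c' d' e' lam m₁₁ m₁₂ m₂₁ m₂₂ : K)
    (hlam : lam ≠ 0) (hM : m₁₁ * m₂₂ - m₁₂ * m₂₁ ≠ 0)
    (hf' :
      (C a' * (X 0) ^ 4 + C b' * (X 0) ^ 3 * (X 1) + C c' * (X 0) ^ 2 * (X 1) ^ 2
        + C d' * (X 0) * (X 1) ^ 3 + C e' * (X 1) ^ 4 : MvPolynomial (Fin 2) K) =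
      C (lam ^ 2) *
        (C a * (C m₁₁ * X 0 + C m₂₁ * X 1) ^ 4
          + C b * (C m₁₁ * X 0 + C m₂₁ * X 1) ^ 3 * (C m₁₂ * X 0 + C m₂₂ * X 1)
          + C c * (C m₁₁ * X 0 + C m₂₁ * X 1) ^ 2 * (C m₁₂ * X 0 + C m₂₂ * X 1) ^ 2
          + C d * (C m₁₁ * X 0 + C m₂₁ * X 1) * (C m₁₂ * X 0 + C m₂₂ * X 1) ^ 3
          + C e * (C m₁₂ * X 0 + C m₂₂ * X 1) ^ 4)) :
    letI r := bqR K a b c d e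
    letI s := bqS K a b c d e
    letI t := bqT K a b c d e
    letI α : K → BQAlg K a b c d e := algebraMap K _
    ∃ ψ : BQAlg K a' b' c' d' e' ≃ₐ[K] BQAlg K a b c d e,
      ψ (bqR K a' b' c' d' e') =
        α lam * (α (m₁₁ ^ 2) * r + α (m₁₁ * m₁₂) * s + α (m₁₂ ^ 2) * t) ∧
      ψ (bqS K a' b' c' d' e') =
        α lam * (α (2 * m₁₁ * m₂₁) * r + α (m₁₁ * m₂₂ + m₁₂ * m₂₁) * s
          + α (2 * m₁₂ * m₂₂) * t) ∧
      ψ (bqT K a' b' c' d' e') =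
        α lam * (α (m₂₁ ^ 2) * r + α (m₂₁ * m₂₂) * s + α (m₂₂ ^ 2) * t) :=
  bq_change_of_coords_general K a b c d e a' b' c' d' e' lam m₁₁ m₁₂ m₂₁ m₂₂ hlam hM hf'
end
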